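/- arXiv:1306.5855 — 6 statements merged into one kernel-verified Lean document; each statement's English description precedes it below -/
import Mathlib

section
/- Let M be a symmetric n×n matrix with nonnegative entries defining the synergy-graph value function v_M, and let (S1, S2) be a partition of N = {1,...,n}. Then v_M(S1) + v_M(S2) equals Σ_{j,j'} M(j,j') over all unordered pairs (counting self-edges once) plus the weight of the cut, cut(S1,S2) = Σ_{j∈S1} Σ_{j'∈S2} M(j,j'). Consequently a partition into two sets maximizes v_M(S1) + v_M(S2) if and only if it is a maximum cut of M. -/
open Finset

/-- The value function induced by a synergy graph `M` on workers `Fin n`. -/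
def synergyValue (n : ℕ) (M : Fin n → Fin n → ℝ) (S : Finset (Fin n)) : ℝ :=
  (∑ j ∈ S, M j j) + (∑ j ∈ S, ∑ j' ∈ S.filter (fun j' => j < j'), M j j')
    + (∑ j ∈ S, ∑ j'' ∈ Sᶜ, M j j'')

/-- The weight of the cut between `S1` and `S2`. -/
def cutWeight (n : ℕ) (M : Fin n → Fin n → ℝ) (S1 S2 : Finset (Fin n)) : ℝ :=
  ∑ j ∈ S1, ∑ j' ∈ S2, M j j'


lemma expand1 (n : ℕ) (M : Fin n → Fin n → ℝ) (A : Finset (Fin n)) :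
    (∑ j ∈ A, ∑ j' ∈ A.filter (fun j' => j < j'), M j j')
      = ∑ j, ∑ j', if j ∈ A ∧ j' ∈ A ∧ j < j' then M j j' else 0 := by
  rw [← Finset.sum_subset (Finset.subset_univ A)
    (f := fun j => ∑ j', if j ∈ A ∧ j' ∈ A ∧ j < j' then M j j' else 0)]
  · refine Finset.sum_congr rfl fun j hj => ?_
    rw [Finset.sum_filter, ← Finset.sum_subset (Finset.subset_univ A)
      (f := fun j' => if j ∈ A ∧ j' ∈ A ∧ j < j' then M j j' else 0)]
    · exact Finset.sum_congr rfl fun j' hj' => by simp [hj, hj']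
    · intro j' _ hj'; simp [hj']
  · intro j _ hj; simp [hj]

lemma expand2 (n : ℕ) (M : Fin n → Fin n → ℝ) (A B : Finset (Fin n)) :
    (∑ j ∈ A, ∑ j' ∈ B, M j j')
      = ∑ j, ∑ j', if j ∈ A ∧ j' ∈ B then M j j' else 0 := by
  rw [← Finset.sum_subset (Finset.subset_univ A)
    (f := fun j => ∑ j', if j ∈ A ∧ j' ∈ B then M j j' else 0)]
  · refine Finset.sum_congr rfl fun j hj => ?_
    rw [← Finset.sum_subset (Finset.subset_univ B)
      (f := fun j' => if j ∈ A ∧ j' ∈ B then M j j' else 0)]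
    · exact Finset.sum_congr rfl fun j' hj' => by simp [hj, hj']
    · intro j' _ hj'; simp [hj']
  · intro j _ hj; simp [hj]

lemma welfare_eq (n : ℕ) (M : Fin n → Fin n → ℝ)
    (hsymm : ∀ j j', M j j' = M j' j) (S : Finset (Fin n)) :
    synergyValue n M S + synergyValue n M Sᶜ
      = ((∑ j, M j j) + (∑ j, ∑ j' ∈ univ.filter (fun j' => j < j'), M j j'))
        + cutWeight n M S Sᶜ := by
  unfold synergyValue cutWeight
  rw [compl_compl]
  have hdiag := Finset.sum_add_sum_compl S (fun j => M j j)
  set F : Fin n → Fin n → ℝ := fun j j' =>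
    (if j ∈ S ∧ j' ∈ S ∧ j < j' then M j j' else 0)
    + (if j ∈ S ∧ j' ∈ Sᶜ then M j j' else 0)
    + (if j ∈ Sᶜ ∧ j' ∈ Sᶜ ∧ j < j' then M j j' else 0)
    + (if j ∈ Sᶜ ∧ j' ∈ S then M j j' else 0) with hF
  set G : Fin n → Fin n → ℝ := fun j j' =>
    (if j ∈ (univ : Finset (Fin n)) ∧ j' ∈ (univ : Finset (Fin n)) ∧ j < j' then M j j' else 0)
    + (if j ∈ S ∧ j' ∈ Sᶜ then M j j' else 0) with hG
  have key : ∑ j, ∑ j', F j j' = ∑ j, ∑ j', G j j' := by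
    have hFs : ∑ j, ∑ j', F j j' = ∑ j, ∑ j', F j' j := Finset.sum_comm ..
    have hGs : ∑ j, ∑ j', G j j' = ∑ j, ∑ j', G j' j := Finset.sum_comm ..
    have h2 : ∑ j, ∑ j', (F j j' + F j' j) = ∑ j, ∑ j', (G j j' + G j' j) := by
      refine Finset.sum_congr rfl fun j _ => Finset.sum_congr rfl fun j' _ => ?_
      simp only [hF, hG, Finset.mem_compl, Finset.mem_univ, true_and]
      rcases lt_trichotomy j j' with h | rfl | h
      · have h' : ¬ j' < j := h.asymm
        by_cases h1 : j ∈ S <;> by_cases h2 : j' ∈ S <;>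
          simp [h1, h2, h, h', hsymm j j']
      · by_cases h1 : j ∈ S <;> simp [h1, lt_irrefl]
      · have h' : ¬ j < j' := h.asymm
        by_cases h1 : j ∈ S <;> by_cases h2 : j' ∈ S <;>
          simp [h1, h2, h, h', hsymm j j']
    have e1 : ∑ j, ∑ j', (F j j' + F j' j) = (∑ j, ∑ j', F j j') + (∑ j, ∑ j', F j' j) := by
      simp [Finset.sum_add_distrib]
    have e2 : ∑ j, ∑ j', (G j j' + G j' j) = (∑ j, ∑ j', G j j') + (∑ j, ∑ j', G j' j) := by
      simp [Finset.sum_add_distrib]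
    rw [e1, e2, ← hFs, ← hGs] at h2
    linarith
  have lF : (∑ j ∈ S, ∑ j' ∈ S.filter (fun j' => j < j'), M j j')
      + (∑ j ∈ S, ∑ j'' ∈ Sᶜ, M j j'')
      + (∑ j ∈ Sᶜ, ∑ j' ∈ Sᶜ.filter (fun j' => j < j'), M j j')
      + (∑ j ∈ Sᶜ, ∑ j'' ∈ S, M j j'') = ∑ j, ∑ j', F j j' := by
    rw [hF]
    simp only [Finset.sum_add_distrib]
    rw [expand1 n M S, expand1 n M Sᶜ, expand2 n M S Sᶜ, expand2 n M Sᶜ S]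
  have lG : (∑ j, ∑ j' ∈ univ.filter (fun j' => j < j'), M j j')
      + (∑ j ∈ S, ∑ j' ∈ Sᶜ, M j j') = ∑ j, ∑ j', G j j' := by
    rw [hG]
    simp only [Finset.sum_add_distrib]
    rw [expand1 n M univ, expand2 n M S Sᶜ]
  linarith

/-- For a partition `(S1, S1ᶜ)`, the social welfare
`v_M S1 + v_M S1ᶜ` equals the total edge weight plus the cut weight; consequently
a two-set partition maximizes welfare iff it is a maximum cut. -/
theorem stmt_8 (n : ℕ) (M : Fin n → Fin n → ℝ)
    (hsymm : ∀ j j', M j j' = M j' j) (hnn : ∀ j j', 0 ≤ M j j')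
    (S1 : Finset (Fin n)) :
    synergyValue n M S1 + synergyValue n M S1ᶜ
      = ((∑ j, M j j) + (∑ j, ∑ j' ∈ univ.filter (fun j' => j < j'), M j j'))
        + cutWeight n M S1 S1ᶜ
    ∧ ((∀ S : Finset (Fin n),
          synergyValue n M S + synergyValue n M Sᶜ
            ≤ synergyValue n M S1 + synergyValue n M S1ᶜ)
        ↔ (∀ S : Finset (Fin n), cutWeight n M S Sᶜ ≤ cutWeight n M S1 S1ᶜ)) := by
  refine ⟨welfare_eq n M hsymm S1, ?_⟩
  have h1 := welfare_eq n M hsymm S1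
  constructor
  · intro h S
    have hS := welfare_eq n M hsymm S
    have := h S
    linarith
  · intro h S
    have hS := welfare_eq n M hsymm S
    have := h S
    linarith
end

section
/- Let M be a symmetric nonnegative synergy matrix on workers N, let (S1, S2) be a maximum-weight cut of M, and set each worker's payment to x_j = M(j,j) + (1/2)·Σ_{j'≠j} M(j,j'). Then the profit of each firm i ∈ {1,2}, v_M(S_i) - Σ_{j∈S_i} x_j, equals half the weight of the cut (S1, S2). -/
open Finset

lemma key_profit (n : ℕ) (M : Fin n → Fin n → ℝ)
    (hsymm : ∀ j j', M j j' = M j' j)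
    (S : Finset (Fin n)) (x : Fin n → ℝ)
    (hx : ∀ j, x j = M j j + (1 / 2) * ∑ j' ∈ univ.filter (fun j' => j' ≠ j), M j j') :
    synergyValue n M S - ∑ j ∈ S, x j = cutWeight n M S Sᶜ / 2 := by
  have hsplit : ∀ j ∈ S, ∑ j' ∈ univ.filter (fun j' => j' ≠ j), M j j'
      = (∑ j' ∈ S.filter (fun j' => j' < j), M j j')
        + (∑ j' ∈ S.filter (fun j' => j < j'), M j j')
        + ∑ j' ∈ Sᶜ, M j j' := by
    intro j hj
    rw [sum_filter, sum_filter, sum_filter, ← Finset.sum_add_sum_compl S]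
    have h1 : ∀ j' ∈ S, (if j' ≠ j then M j j' else 0)
        = (if j' < j then M j j' else 0) + (if j < j' then M j j' else 0) := by
      intro j' _
      rcases lt_trichotomy j' j with h | h | h
      · simp [ne_of_lt h, h, not_lt.mpr (le_of_lt h)]
      · simp [h]
      · simp [(ne_of_lt h).symm, h, not_lt.mpr (le_of_lt h)]
    have h2 : ∀ j' ∈ Sᶜ, (if j' ≠ j then M j j' else 0) = M j j' := by
      intro j' hj'
      rw [if_pos]
      rintro rfl
      exact (mem_compl.mp hj') hj
    rw [sum_congr rfl h1, sum_congr rfl h2, sum_add_distrib]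
  have hx' : ∑ j ∈ S, x j = (∑ j ∈ S, M j j)
      + (1/2) * ((∑ j ∈ S, ∑ j' ∈ S.filter (fun j' => j' < j), M j j')
        + (∑ j ∈ S, ∑ j' ∈ S.filter (fun j' => j < j'), M j j')
        + ∑ j ∈ S, ∑ j' ∈ Sᶜ, M j j') := by
    rw [Finset.sum_congr rfl (fun j hj => by rw [hx j, hsplit j hj])]
    rw [sum_add_distrib, ← mul_sum]
    congr 1
    rw [sum_add_distrib, sum_add_distrib]
  have hswap : (∑ j ∈ S, ∑ j' ∈ S.filter (fun j' => j' < j), M j j')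
      = ∑ j ∈ S, ∑ j' ∈ S.filter (fun j' => j < j'), M j j' := by
    simp only [sum_filter]
    rw [Finset.sum_comm]
    refine sum_congr rfl fun j _ => sum_congr rfl fun j' _ => ?_
    by_cases h : j < j' <;> simp [h, hsymm j j']
  rw [hx', hswap, synergyValue, cutWeight]
  ring

/-- With a maximum cut `(S1, S1ᶜ)` and payments
`x j = M j j + (1/2) Σ_{j' ≠ j} M j j'`, each firm's profit equals half the cut weight. -/
theorem stmt_9 (n : ℕ) (M : Fin n → Fin n → ℝ)
    (hsymm : ∀ j j', M j j' = M j' j) (hnn : ∀ j j', 0 ≤ M j j')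
    (S1 : Finset (Fin n))
    (hmaxcut : ∀ S : Finset (Fin n), cutWeight n M S Sᶜ ≤ cutWeight n M S1 S1ᶜ)
    (x : Fin n → ℝ)
    (hx : ∀ j, x j = M j j + (1 / 2) * ∑ j' ∈ univ.filter (fun j' => j' ≠ j), M j j') :
    synergyValue n M S1 - ∑ j ∈ S1, x j = cutWeight n M S1 S1ᶜ / 2
    ∧ synergyValue n M S1ᶜ - ∑ j ∈ S1ᶜ, x j = cutWeight n M S1 S1ᶜ / 2 := by
  have hcut : cutWeight n M S1ᶜ S1 = cutWeight n M S1 S1ᶜ := by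
    rw [cutWeight, cutWeight, Finset.sum_comm]
    exact sum_congr rfl fun j _ => sum_congr rfl fun j' _ => hsymm j' j
  refine ⟨key_profit n M hsymm S1 x hx, ?_⟩
  have := key_profit n M hsymm S1ᶜ x hx
  rwa [compl_compl, hcut] at this
end

section
/- Consider the symmetric weighted game with 2 firms, 3 unit-weight workers, and the non-subadditive value v with v(0)=0, v(1)=3, v(2)=4, v(3)=6. There is no PSPE: there is no partition (S1, S2) with |S1|=2, |S2|=1 (the welfare-optimal shape) and payments x ∈ ℝ^3 satisfying all the PSPE stability constraints. -/
open Finset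

/-- The symmetric homogeneous game with 2 firms, 3 unit-weight workers,
and non-subadditive value `v = (0,3,4,6)` has no PSPE: no partition with shape `(2,1)`
(the welfare-optimal shape) and payments satisfying the stability constraints exists. -/
theorem stmt_11 (v : ℕ → ℝ)
    (hv : v 0 = 0 ∧ v 1 = 3 ∧ v 2 = 4 ∧ v 3 = 6) :
    ¬ ∃ (S1 : Finset (Fin 3)) (x : Fin 3 → ℝ), S1.card = 2 ∧
      (∀ A B : Finset (Fin 3), A ⊆ S1 → B ⊆ S1ᶜ →
        v ((S1 \ A ∪ B).card) - ∑ j ∈ B, x j ≤ v S1.card - ∑ j ∈ A, x j) ∧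
      (∀ A B : Finset (Fin 3), A ⊆ S1ᶜ → B ⊆ S1 →
        v ((S1ᶜ \ A ∪ B).card) - ∑ j ∈ B, x j ≤ v S1ᶜ.card - ∑ j ∈ A, x j) := by
  obtain ⟨hv0, hv1, hv2, hv3⟩ := hv
  rintro ⟨S1, x, hcard, h1, h2⟩
  have hcc : S1ᶜ.card = 1 := by
    have := card_compl S1
    simp [hcard] at this
    omega
  obtain ⟨k, hk⟩ := card_eq_one.mp hcc
  -- x k ≥ 2 : firm 1 recruits k
  have hxk : v 3 - x k ≤ v 2 := by
    have h := h1 ∅ {k} (empty_subset _) (by simp [hk])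
    have huniv : S1 \ ∅ ∪ {k} = (univ : Finset (Fin 3)) := by
      rw [sdiff_empty, ← hk, union_compl]
    rw [huniv] at h
    simpa [hcard] using h
  -- each worker in S1 gets at most 1
  have hle : ∀ j ∈ S1, x j ≤ v 2 - v 1 := by
    intro j hj
    have h := h1 {j} ∅ (by simpa using hj) (empty_subset _)
    have hc : (S1 \ {j} ∪ ∅).card = 1 := by
      rw [union_empty, card_sdiff_of_subset (by simpa using hj), hcard, card_singleton]
    rw [hc] at h
    simp [hcard] at h
    linarith
  have hsum : ∑ j ∈ S1, x j ≤ 2 * (v 2 - v 1) := by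
    calc ∑ j ∈ S1, x j ≤ ∑ j ∈ S1, (v 2 - v 1) := Finset.sum_le_sum hle
    _ = 2 * (v 2 - v 1) := by rw [Finset.sum_const, hcard]; ring
  -- firm 2 fires k and hires all of S1
  have hmain := h2 {k} S1 (by rw [hk]) (Subset.refl _)
  have hempty : S1ᶜ \ {k} = ∅ := by rw [hk]; simp
  rw [hempty, empty_union, hcard, hcc] at hmain
  simp at hmain
  linarith
end

section
/- Let G be a weighted competition game with k symmetric firms whose value function v: ℕ → ℝ≥0 has non-increasing increments, and suppose there exists an almost-balanced partition P* = (S_1,...,S_k) of the workers (w(S_i) ∈ {q, q+1} for all i, where q = ⌊W/k⌋). Then with δ = v(q+1) - v(q) and payments x_j = δ·w_j, the outcome (P*, x) is a PSPE: any firm deviating to a set S' of total weight q', paying at least δ·q' in total, earns v(q') - δ·q' ≤ v(q) - δ·q, its equilibrium profit. -/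
open Finset

lemma aux_low (v : ℕ → ℝ) (q : ℕ)
    (hsub : ∀ a b : ℕ, a ≤ b → v (a + 1) - v a ≥ v (b + 1) - v b) :
    ∀ m, m ≤ q → (v (q + 1) - v q) * (q - m : ℕ) ≤ v q - v m := by
  induction q with
  | zero => intro m hm; simp [Nat.le_zero.mp hm]
  | succ p ih =>
    intro m hm
    rcases Nat.lt_or_ge m (p+1) with h | h
    · have hml : m ≤ p := Nat.lt_succ_iff.mp h
      have h2 : (v (p+1) - v p) * (p - m : ℕ) ≤ v p - v m := ih m hml
      have h1 : v (p + 1 + 1) - v (p + 1) ≤ v (p + 1) - v p :=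
        hsub p (p+1) (Nat.le_succ p)
      have hstep : (v (p + 1 + 1) - v (p + 1)) * (p - m : ℕ) ≤ v p - v m :=
        le_trans (mul_le_mul_of_nonneg_right h1 (by positivity)) h2
      have hcast : ((p + 1 - m : ℕ) : ℝ) = ((p - m : ℕ) : ℝ) + 1 := by
        rw [Nat.succ_sub hml]; push_cast; ring
      calc (v (p + 1 + 1) - v (p + 1)) * ((p + 1 - m : ℕ) : ℝ)
          = (v (p + 1 + 1) - v (p + 1)) * (p - m : ℕ)
            + (v (p + 1 + 1) - v (p + 1)) := by rw [hcast]; ring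
        _ ≤ (v p - v m) + (v (p + 1) - v p) := add_le_add hstep h1
        _ = v (p + 1) - v m := by ring
    · have : m = p + 1 := le_antisymm hm h
      simp [this]

lemma aux_high (v : ℕ → ℝ) (q : ℕ)
    (hsub : ∀ a b : ℕ, a ≤ b → v (a + 1) - v a ≥ v (b + 1) - v b) :
    ∀ m, q ≤ m → v m - v q ≤ (v (q + 1) - v q) * (m - q : ℕ) := by
  intro m hm
  induction m with
  | zero =>
    have : q = 0 := Nat.le_zero.mp hm
    simp [this]
  | succ p ih =>
    rcases Nat.lt_or_ge q (p+1) with h | h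
    · have hqp : q ≤ p := Nat.lt_succ_iff.mp h
      have ihp := ih hqp
      have h1 : v (p + 1) - v p ≤ v (q + 1) - v q := hsub q p hqp
      have hcast : ((p + 1 - q : ℕ) : ℝ) = ((p - q : ℕ) : ℝ) + 1 := by
        rw [Nat.succ_sub hqp]; push_cast; ring
      calc v (p+1) - v q = (v p - v q) + (v (p+1) - v p) := by ring
        _ ≤ (v (q+1) - v q) * (p - q : ℕ) + (v (q+1) - v q) := add_le_add ihp h1
        _ = (v (q + 1) - v q) * ((p + 1 - q : ℕ) : ℝ) := by rw [hcast]; ring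
    · have : q = p + 1 := le_antisymm hm h
      simp [this]

/-- In a weighted game with `k` symmetric firms whose value function has
non-increasing increments, if there is an almost-balanced partition `P*` (each firm's
total weight is `q` or `q+1` where `q = ⌊W/k⌋`), then with `δ = v (q+1) - v q` and
payments `x j = δ * w j`, the outcome `(P*, x)` is a PSPE: any firm deviating to a set
`S'` earns at most its equilibrium profit. -/
theorem stmt_14 (n k : ℕ) (hk : 0 < k) (w : Fin n → ℕ) (hw : ∀ j, 0 < w j)
    (v : ℕ → ℝ) (hvnn : ∀ q, 0 ≤ v q) (hv0 : v 0 = 0)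
    (hsub : ∀ a b : ℕ, a ≤ b → v (a + 1) - v a ≥ v (b + 1) - v b)
    (W : ℕ) (hW : W = ∑ j, w j) (q : ℕ) (hq : q = W / k)
    (S : Fin k → Finset (Fin n))
    (hdisj : ∀ i i' : Fin k, i ≠ i' → Disjoint (S i) (S i'))
    (hcover : ∀ j : Fin n, ∃ i, j ∈ S i)
    (hbal : ∀ i : Fin k, (∑ j ∈ S i, w j) = q ∨ (∑ j ∈ S i, w j) = q + 1)
    (δ : ℝ) (hδ : δ = v (q + 1) - v q)
    (x : Fin n → ℝ) (hx : ∀ j, x j = δ * w j) :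
    ∀ i : Fin k, ∀ S' : Finset (Fin n),
      v (∑ j ∈ S', w j) - δ * (∑ j ∈ S', w j)
        ≤ v (∑ j ∈ S i, w j) - ∑ j ∈ S i, x j := by
  intro i S'
  have hxsum : (∑ j ∈ S i, x j) = δ * (∑ j ∈ S i, w j : ℕ) := by
    push_cast
    rw [Finset.mul_sum]
    exact Finset.sum_congr rfl fun j _ => hx j
  rw [hxsum]
  -- key: ∀ m, v m - δ m ≤ v q - δ q
  have key : ∀ m : ℕ, v m - δ * m ≤ v q - δ * q := by
    intro m
    rcases le_or_gt m q with h | h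
    · have := aux_low v q hsub m h
      rw [hδ]
      have hc : ((q - m : ℕ) : ℝ) = (q : ℝ) - m := by
        push_cast [Nat.cast_sub h]; ring
      rw [hc] at this; nlinarith [this]
    · have := aux_high v q hsub m h.le
      rw [hδ]
      have hc : ((m - q : ℕ) : ℝ) = (m : ℝ) - q := by
        push_cast [Nat.cast_sub h.le]; ring
      rw [hc] at this; nlinarith [this]
  have heq : v q - δ * q = v (q+1) - δ * (q+1) := by
    rw [hδ]; push_cast; ring
  rcases hbal i with hb | hb <;> rw [hb]
  · exact key _
  · rw [show ((q+1 : ℕ) : ℝ) = (q : ℝ) + 1 by push_cast; ring, ← heq]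
    exact key _
end

section
/- Let v_1, v_2: 2^N → ℝ≥0 be submodular with v_i(∅)=0, let Z = max{v_1(N), v_2(N)}, Z' > Z, and extend to N' = N ∪ {x, y} by v(S) = v_1(S) + v_2(S), v(S ∪ {x}) = v_1(S) + Z + Z', v(S ∪ {y}) = v_2(S) + Z + Z', v(S ∪ {x,y}) = 2Z + Z' for all S ⊆ N. Then v is submodular on 2^{N'}. -/
open Finset

/-- The symmetrization of two submodular value functions is submodular.
Given submodular `v1, v2` on subsets of `N` with `v_i ∅ = 0`, `Z = max (v1 N) (v2 N)`,
`Z' > Z`, and `v` on subsets of `N ∪ {x, y}` defined by `v S = v1 S + v2 S`,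
`v (S ∪ {x}) = v1 S + Z + Z'`, `v (S ∪ {y}) = v2 S + Z + Z'`,
`v (S ∪ {x,y}) = 2Z + Z'` for `S ⊆ N`, the function `v` is submodular. -/
theorem stmt_17 {α : Type*} [DecidableEq α]
    (N : Finset α) (x y : α) (hx : x ∉ N) (hy : y ∉ N) (hxy : x ≠ y)
    (v1 v2 : Finset α → ℝ)
    (hnn1 : ∀ S, 0 ≤ v1 S) (hnn2 : ∀ S, 0 ≤ v2 S)
    (h10 : v1 ∅ = 0) (h20 : v2 ∅ = 0)
    (hmono1 : ∀ S T, S ⊆ T → v1 S ≤ v1 T) (hmono2 : ∀ S T, S ⊆ T → v2 S ≤ v2 T)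
    (hsub1 : ∀ S T, S ⊆ N → T ⊆ N → v1 (S ∪ T) + v1 (S ∩ T) ≤ v1 S + v1 T)
    (hsub2 : ∀ S T, S ⊆ N → T ⊆ N → v2 (S ∪ T) + v2 (S ∩ T) ≤ v2 S + v2 T)
    (Z Z' : ℝ) (hZ : Z = max (v1 N) (v2 N)) (hZ' : Z < Z')
    (v : Finset α → ℝ)
    (hvS : ∀ S, S ⊆ N → v S = v1 S + v2 S)
    (hvSx : ∀ S, S ⊆ N → v (insert x S) = v1 S + Z + Z')
    (hvSy : ∀ S, S ⊆ N → v (insert y S) = v2 S + Z + Z')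
    (hvSxy : ∀ S, S ⊆ N → v (insert x (insert y S)) = 2 * Z + Z') :
    ∀ S T : Finset α, S ⊆ insert x (insert y N) → T ⊆ insert x (insert y N) →
      v (S ∪ T) + v (S ∩ T) ≤ v S + v T := by
  -- Z' is nonnegative
  have hZ0 : 0 ≤ Z := hZ ▸ le_trans (hnn1 N) (le_max_left _ _)
  have hZ'0 : 0 ≤ Z' := le_trans hZ0 hZ'.le
  -- value formula
  have hval : ∀ U : Finset α, U ⊆ insert x (insert y N) →
      v U = (if x ∈ U then (if y ∈ U then 2 * Z + Z'
               else v1 (U \ {x, y}) + Z + Z')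
             else (if y ∈ U then v2 (U \ {x, y}) + Z + Z'
               else v1 (U \ {x, y}) + v2 (U \ {x, y}))) := by
    intro U hU
    have hC : U \ {x, y} ⊆ N := by
      intro a ha
      simp only [mem_sdiff, mem_insert, mem_singleton] at ha
      have h3 := hU ha.1
      simp only [mem_insert] at h3
      rcases h3 with h | h | h
      · exact absurd h (by tauto)
      · exact absurd h (by tauto)
      · exact h
    by_cases hxU : x ∈ U <;> by_cases hyU : y ∈ U <;> simp only [hxU, hyU, if_true, if_false]
    · have : U = insert x (insert y (U \ {x, y})) := by
        ext a
        simp only [mem_insert, mem_sdiff, mem_singleton]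
        constructor
        · intro h; by_cases h1 : a = x; · tauto
          by_cases h2 : a = y <;> tauto
        · rintro (rfl | rfl | ⟨h, _⟩) <;> assumption
      conv_lhs => rw [this, hvSxy _ hC]
    · have : U = insert x (U \ {x, y}) := by
        ext a
        simp only [mem_insert, mem_sdiff, mem_singleton]
        constructor
        · intro h; by_cases h1 : a = x; · tauto
          by_cases h2 : a = y
          · subst h2; exact absurd h hyU
          · tauto
        · rintro (rfl | ⟨h, _⟩) <;> assumption
      conv_lhs => rw [this, hvSx _ hC]
    · have : U = insert y (U \ {x, y}) := by
        ext a
        simp only [mem_insert, mem_sdiff, mem_singleton]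
        constructor
        · intro h; by_cases h2 : a = y; · tauto
          by_cases h1 : a = x
          · subst h1; exact absurd h hxU
          · tauto
        · rintro (rfl | ⟨h, _⟩) <;> assumption
      conv_lhs => rw [this, hvSy _ hC]
    · have : U = U \ {x, y} := by
        ext a
        simp only [mem_sdiff, mem_singleton, mem_insert]
        constructor
        · intro h
          refine ⟨h, ?_⟩
          rintro (rfl | rfl) <;> [exact hxU h; exact hyU h]
        · tauto
      rw [← this] at hC ⊢
      rw [hvS _ hC, this]
  intro S T hS hT
  have hST : S ∪ T ⊆ insert x (insert y N) := union_subset hS hT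
  have hSTi : S ∩ T ⊆ insert x (insert y N) := le_trans inter_subset_left hS
  set A := S \ {x, y} with hA
  set B := T \ {x, y} with hB
  have hAN : A ⊆ N := by
    intro a ha
    simp only [hA, mem_sdiff, mem_insert, mem_singleton] at ha
    have h3 := hS ha.1
    simp only [mem_insert] at h3
    rcases h3 with h | h | h
    · exact absurd h (by tauto)
    · exact absurd h (by tauto)
    · exact h
  have hBN : B ⊆ N := by
    intro a ha
    simp only [hB, mem_sdiff, mem_insert, mem_singleton] at ha
    have h3 := hT ha.1
    simp only [mem_insert] at h3
    rcases h3 with h | h | h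
    · exact absurd h (by tauto)
    · exact absurd h (by tauto)
    · exact h
  have hU : (S ∪ T) \ {x, y} = A ∪ B := union_sdiff_distrib ..
  have hI : (S ∩ T) \ {x, y} = A ∩ B := by
    simp only [hA, hB]
    ext a; simp only [mem_sdiff, mem_inter]; tauto
  have e1 := hval S hS
  have e2 := hval T hT
  have e3 := hval (S ∪ T) hST
  have e4 := hval (S ∩ T) hSTi
  rw [hU] at e3
  rw [hI] at e4
  have m1 : v1 (A ∩ B) ≤ v1 A := hmono1 _ _ inter_subset_left
  have m2 : v1 (A ∩ B) ≤ v1 B := hmono1 _ _ inter_subset_right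
  have m3 : v2 (A ∩ B) ≤ v2 A := hmono2 _ _ inter_subset_left
  have m4 : v2 (A ∩ B) ≤ v2 B := hmono2 _ _ inter_subset_right
  have s1 := hsub1 A B hAN hBN
  have s2 := hsub2 A B hAN hBN
  rw [e1, e2, e3, e4]
  by_cases h1 : x ∈ S <;> by_cases h2 : y ∈ S <;> by_cases h3 : x ∈ T <;> by_cases h4 : y ∈ T <;>
    simp only [mem_union, mem_inter, h1, h2, h3, h4, true_or, or_true, true_and, and_true,
      false_or, or_false, false_and, and_false, if_true, if_false] <;>
    linarith
end

section
/- There is no influence network (probabilistic coverage representation) realizing the homogeneous weighted value v, symmetric in the workers, with v(0)=0, v(1)=3, v(2)=6, v(3)=8 on three workers; that is, there is no nonnegative function f on the nonempty subsets of {1,2,3} such that v(|S|) = Σ_{T : T ∩ S ≠ ∅} f(T) for all S ⊆ {1,2,3}. -/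
open Finset

/-- There is no influence-network (probabilistic coverage) representation
of the homogeneous weighted value `v` with `v 0 = 0`, `v 1 = 3`, `v 2 = 6`, `v 3 = 8` on
three workers: no nonnegative weight function `f` on nonempty subsets of `{1,2,3}`
satisfies `v |S| = Σ_{T : T ∩ S ≠ ∅} f T` for all `S`. -/
theorem stmt_19 (v : ℕ → ℝ) (h0 : v 0 = 0) (h1 : v 1 = 3) (h2 : v 2 = 6)
    (h3 : v 3 = 8) :
    ¬ ∃ f : Finset (Fin 3) → ℝ,
      (∀ T : Finset (Fin 3), T.Nonempty → 0 ≤ f T) ∧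
      (∀ S : Finset (Fin 3),
        (∑ T ∈ univ.filter (fun T : Finset (Fin 3) => (T ∩ S).Nonempty), f T)
          = v S.card) := by
  rintro ⟨f, hf, h⟩
  have e1 := h {0}
  have e2 := h {1}
  have e3 := h {2}
  have e4 := h {0,1}
  have e5 := h {0,2}
  have e6 := h {1,2}
  have e7 := h {0,1,2}
  have k1 : univ.filter (fun T : Finset (Fin 3) => (T ∩ ({0} : Finset (Fin 3))).Nonempty)
      = ({{0},{0,1},{0,2},{0,1,2}} : Finset (Finset (Fin 3))) := by decide
  have k2 : univ.filter (fun T : Finset (Fin 3) => (T ∩ ({1} : Finset (Fin 3))).Nonempty)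
      = ({{1},{0,1},{1,2},{0,1,2}} : Finset (Finset (Fin 3))) := by decide
  have k3 : univ.filter (fun T : Finset (Fin 3) => (T ∩ ({2} : Finset (Fin 3))).Nonempty)
      = ({{2},{0,2},{1,2},{0,1,2}} : Finset (Finset (Fin 3))) := by decide
  have k4 : univ.filter (fun T : Finset (Fin 3) => (T ∩ ({0,1} : Finset (Fin 3))).Nonempty)
      = ({{0},{1},{0,1},{0,2},{1,2},{0,1,2}} : Finset (Finset (Fin 3))) := by decide
  have k5 : univ.filter (fun T : Finset (Fin 3) => (T ∩ ({0,2} : Finset (Fin 3))).Nonempty)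
      = ({{0},{2},{0,1},{0,2},{1,2},{0,1,2}} : Finset (Finset (Fin 3))) := by decide
  have k6 : univ.filter (fun T : Finset (Fin 3) => (T ∩ ({1,2} : Finset (Fin 3))).Nonempty)
      = ({{1},{2},{0,1},{0,2},{1,2},{0,1,2}} : Finset (Finset (Fin 3))) := by decide
  have k7 : univ.filter (fun T : Finset (Fin 3) => (T ∩ ({0,1,2} : Finset (Fin 3))).Nonempty)
      = ({{0},{1},{2},{0,1},{0,2},{1,2},{0,1,2}} : Finset (Finset (Fin 3))) := by decide
  rw [k1] at e1; rw [k2] at e2; rw [k3] at e3; rw [k4] at e4; rw [k5] at e5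
  rw [k6] at e6; rw [k7] at e7
  simp (config := { decide := true }) only [Finset.sum_insert, Finset.mem_insert,
    Finset.sum_singleton, Finset.mem_singleton] at e1 e2 e3 e4 e5 e6 e7
  have n7 : 0 ≤ f {0,1,2} := hf _ (by decide)
  rw [show #({0,2} : Finset (Fin 3)) = 2 from by decide] at e5
  rw [show #({1,2} : Finset (Fin 3)) = 2 from by decide] at e6
  rw [show #({0,1,2} : Finset (Fin 3)) = 3 from by decide] at e7
  norm_num at e1 e2 e3 e4 e5 e6 e7
  rw [h1] at e1 e2 e3
  rw [h2] at e4 e5 e6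
  rw [h3] at e7
  linarith
end
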